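/- arXiv:2404.09788 — 2 statements merged into one kernel-verified Lean document; each statement's English description precedes it below -/
import Mathlib

section
/- Let A be a node of a transparent SHARE tree such that the subtree rooted at A has exactly k ≥ 1 active variables. Then the subtree rooted at A has at most 4k − 2 nodes if A is a shape-function node, and at most 4k − 3 nodes otherwise (i.e., if A is a binary-operation node or a variable node). -/
/-- An expression tree over the variable set `{x_0, …, x_{n-1}}`: every leaf is a
variable node, every internal node is either a shape-function node (one child)
or a binary-operation node (two children). -/
inductive ExprTree (n : ℕ) : Type where
  | var : Fin n → ExprTree n
  | shape : ExprTree n → ExprTree n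
  | binop : ExprTree n → ExprTree n → ExprTree n

namespace ExprTree

/-- The set of active variables of a tree: the variables labeling some leaf. -/
def activeVars {n : ℕ} : ExprTree n → Finset (Fin n)
  | var i => {i}
  | shape t => activeVars t
  | binop l r => activeVars l ∪ activeVars r

/-- Rule 2: at every binary-operation node, the sets of active variables of the
subtrees rooted at its two children are disjoint. -/
def Rule2 {n : ℕ} : ExprTree n → Prop
  | var _ => True
  | shape t => Rule2 t
  | binop l r => Disjoint (activeVars l) (activeVars r) ∧ Rule2 l ∧ Rule2 r

/-- Whether the root node is a shape-function node. -/
def IsShapeNode {n : ℕ} : ExprTree n → Prop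
  | shape _ => True
  | _ => False

/-- No shape-function node has a shape-function node as its child. -/
def NoShapeShape {n : ℕ} : ExprTree n → Prop
  | var _ => True
  | shape t => ¬ IsShapeNode t ∧ NoShapeShape t
  | binop l r => NoShapeShape l ∧ NoShapeShape r

/-- A transparent SHARE tree: an expression tree satisfying Rule 2 and the
no-shape-of-shape condition (every leaf is a variable node by construction). -/
def Transparent {n : ℕ} (t : ExprTree n) : Prop := Rule2 t ∧ NoShapeShape t

/-- The number of leaves labeled by the variable `i`. -/
def leafCount {n : ℕ} (i : Fin n) : ExprTree n → ℕ
  | var j => if j = i then 1 else 0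
  | shape t => leafCount i t
  | binop l r => leafCount i l + leafCount i r

/-- The total number of (variable) leaves. -/
def numLeaves {n : ℕ} : ExprTree n → ℕ
  | var _ => 1
  | shape t => numLeaves t
  | binop l r => numLeaves l + numLeaves r

/-- The number of binary-operation nodes. -/
def numBinops {n : ℕ} : ExprTree n → ℕ
  | var _ => 0
  | shape t => numBinops t
  | binop l r => numBinops l + numBinops r + 1

/-- The total number of nodes. -/
def numNodes {n : ℕ} : ExprTree n → ℕ
  | var _ => 1
  | shape t => numNodes t + 1
  | binop l r => numNodes l + numNodes r + 1

/-- The depth: the maximum number of nodes on a path from the root to a leaf. -/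
def depth {n : ℕ} : ExprTree n → ℕ
  | var _ => 1
  | shape t => depth t + 1
  | binop l r => max (depth l) (depth r) + 1

/-- `IsSubtree s t`: `s` is the subtree of `t` rooted at some node of `t`. -/
inductive IsSubtree {n : ℕ} : ExprTree n → ExprTree n → Prop
  | refl (t : ExprTree n) : IsSubtree t t
  | shape {s t : ExprTree n} : IsSubtree s t → IsSubtree s (ExprTree.shape t)
  | left {s l r : ExprTree n} : IsSubtree s l → IsSubtree s (ExprTree.binop l r)
  | right {s l r : ExprTree n} : IsSubtree s r → IsSubtree s (ExprTree.binop l r)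

end ExprTree


namespace ExprTree

lemma transparent_subtree {n : ℕ} {s t : ExprTree n} (h : IsSubtree s t)
    (ht : t.Transparent) : s.Transparent := by
  induction h with
  | refl => exact ht
  | shape _ ih => exact ih ⟨ht.1, ht.2.2⟩
  | left _ ih => exact ih ⟨ht.1.2.1, ht.2.1⟩
  | right _ ih => exact ih ⟨ht.1.2.2, ht.2.2⟩

lemma card_eq_numLeaves {n : ℕ} (t : ExprTree n) (h : Rule2 t) :
    t.activeVars.card = t.numLeaves := by
  induction t with
  | var i => simp [activeVars, numLeaves]
  | shape t ih => exact ih h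
  | binop l r ihl ihr =>
      simp only [activeVars, numLeaves]
      rw [Finset.card_union_of_disjoint h.1, ihl h.2.1, ihr h.2.2]

lemma one_le_numLeaves {n : ℕ} (t : ExprTree n) : 1 ≤ t.numLeaves := by
  induction t with
  | var i => exact le_refl 1
  | shape t ih => exact ih
  | binop l r ihl ihr => exact le_trans ihl (Nat.le_add_right _ _)

lemma bound {n : ℕ} (t : ExprTree n) (h : NoShapeShape t) :
    (t.IsShapeNode → t.numNodes ≤ 4 * t.numLeaves - 2) ∧
    (¬ t.IsShapeNode → t.numNodes ≤ 4 * t.numLeaves - 3) := by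
  induction t with
  | var i =>
      exact ⟨fun hs => hs.elim, fun _ => le_refl 1⟩
  | shape t ih =>
      refine ⟨fun _ => ?_, fun hns => absurd trivial hns⟩
      have h1 := (ih h.2).2 h.1
      have hL := one_le_numLeaves t
      simp only [numNodes, numLeaves]
      omega
  | binop l r ihl ihr =>
      refine ⟨fun hs => hs.elim, fun _ => ?_⟩
      have hl' := ihl h.1
      have hr' := ihr h.2
      have hl2 : l.numNodes ≤ 4 * l.numLeaves - 2 := by
        by_cases hc : l.IsShapeNode
        · exact hl'.1 hc
        · have := hl'.2 hc; omega
      have hr2 : r.numNodes ≤ 4 * r.numLeaves - 2 := by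
        by_cases hc : r.IsShapeNode
        · exact hr'.1 hc
        · have := hr'.2 hc; omega
      have hLl := one_le_numLeaves l
      have hLr := one_le_numLeaves r
      simp only [numNodes, numLeaves]
      omega

end ExprTree

/-- If a node of a transparent SHARE tree roots a subtree with
exactly `k ≥ 1` active variables, then that subtree has at most `4k - 2` nodes
if the node is a shape-function node, and at most `4k - 3` nodes otherwise. -/
theorem stmt5 {n : ℕ} (t s : ExprTree n) (ht : t.Transparent)
    (hsub : ExprTree.IsSubtree s t) (k : ℕ) (hk : 1 ≤ k)
    (hcard : s.activeVars.card = k) :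
    (s.IsShapeNode → s.numNodes ≤ 4 * k - 2) ∧
    (¬ s.IsShapeNode → s.numNodes ≤ 4 * k - 3) := by
  have hts := ExprTree.transparent_subtree hsub ht
  have := ExprTree.bound s hts.2
  rw [ExprTree.card_eq_numLeaves s hts.1] at hcard
  subst hcard
  exact this
end

section
/- For every integer k ≥ 1 there exists a transparent SHARE tree with exactly k active variables and exactly 4k − 3 nodes, and there exists a transparent SHARE tree with exactly k active variables and exactly 4k − 2 nodes whose root is a shape-function node; hence the node-count bounds 4k − 3 (root not a shape-function node) and 4k − 2 (root a shape-function node) are attained. -/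
namespace ExprTree

/-- Auxiliary construction: a chain tree using variables `0..m`. -/
def build (n : ℕ) : (m : ℕ) → m < n → ExprTree n
  | 0, h => var ⟨0, h⟩
  | m+1, h => binop (shape (var ⟨m+1, h⟩)) (shape (build n m (by omega)))

lemma build_mem {n : ℕ} : ∀ (m : ℕ) (h : m < n) (i : Fin n),
    i ∈ (build n m h).activeVars → i.val ≤ m := by
  intro m
  induction m with
  | zero =>
    intro h i hi
    simp only [build, activeVars, Finset.mem_singleton] at hi
    subst hi; rfl
  | succ m ih =>
    intro h i hi
    simp only [build, activeVars, Finset.mem_union, Finset.mem_singleton] at hi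
    rcases hi with hi | hi
    · subst hi; rfl
    · exact le_trans (ih _ i hi) (by omega)

lemma build_card {n : ℕ} : ∀ (m : ℕ) (h : m < n),
    (build n m h).activeVars.card = m + 1 := by
  intro m
  induction m with
  | zero => intro h; simp [build, activeVars]
  | succ m ih =>
    intro h
    have hnot : (⟨m+1, h⟩ : Fin n) ∉ (build n m (by omega)).activeVars := by
      intro hmem
      have := build_mem m (by omega) _ hmem
      simp at this
    show ({⟨m+1, h⟩} ∪ (build n m (by omega)).activeVars).card = m + 1 + 1
    rw [Finset.insert_eq ⟨m+1, h⟩ (ExprTree.build n m (by omega)).activeVars |>.symm, Finset.card_insert_of_notMem hnot, ih]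

lemma build_nodes {n : ℕ} : ∀ (m : ℕ) (h : m < n),
    (build n m h).numNodes = 4 * m + 1 := by
  intro m
  induction m with
  | zero => intro h; rfl
  | succ m ih =>
    intro h
    show (1 + 1) + ((build n m (by omega)).numNodes + 1) + 1 = 4 * (m+1) + 1
    rw [ih]; omega

lemma build_not_shape {n : ℕ} (m : ℕ) (h : m < n) : ¬ (build n m h).IsShapeNode := by
  cases m <;> simp [build, IsShapeNode]

lemma build_transparent {n : ℕ} : ∀ (m : ℕ) (h : m < n),
    (build n m h).Transparent := by
  intro m
  induction m with
  | zero => intro h; exact ⟨trivial, trivial⟩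
  | succ m ih =>
    intro h
    obtain ⟨hr, hs⟩ := ih (by omega)
    refine ⟨⟨?_, trivial, hr⟩, ⟨by simp [IsShapeNode], trivial⟩,
      ⟨build_not_shape m (by omega), hs⟩⟩
    show Disjoint {(⟨m+1, h⟩ : Fin n)} (build n m (by omega)).activeVars
    rw [Finset.disjoint_singleton_left]
    intro hmem
    have := build_mem m (by omega) _ hmem
    simp at this

end ExprTree

/-- For every `k ≥ 1` there is a transparent SHARE tree with
exactly `k` active variables and exactly `4k - 3` nodes whose root is not a
shape-function node, and one with exactly `k` active variables and exactly
`4k - 2` nodes whose root is a shape-function node; hence both node-count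
bounds are attained. -/
theorem stmt7 (k : ℕ) (hk : 1 ≤ k) :
    (∃ t : ExprTree k, t.Transparent ∧ t.activeVars.card = k ∧
      ¬ t.IsShapeNode ∧ t.numNodes = 4 * k - 3) ∧
    (∃ t : ExprTree k, t.Transparent ∧ t.activeVars.card = k ∧
      t.IsShapeNode ∧ t.numNodes = 4 * k - 2) := by
  have hlt : k - 1 < k := by omega
  set t := ExprTree.build k (k-1) hlt with ht
  have htr := ExprTree.build_transparent (n := k) (k-1) hlt
  have hcard : t.activeVars.card = k := by
    rw [ht, ExprTree.build_card]; omega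
  have hnodes : t.numNodes = 4 * k - 3 := by
    rw [ht, ExprTree.build_nodes]; omega
  constructor
  · exact ⟨t, htr, hcard, ExprTree.build_not_shape _ _, hnodes⟩
  · refine ⟨ExprTree.shape t, ⟨htr.1, ExprTree.build_not_shape _ _, htr.2⟩,
      hcard, trivial, ?_⟩
    show t.numNodes + 1 = 4 * k - 2
    omega
end
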